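/- arXiv:1907.03813 — 4 statements merged into one kernel-verified Lean document; each statement's English description precedes it below -/
import Mathlib

section
/- The DTM function with power q is 1-Lipschitz: for a Borel probability measure P on ℝ^d, m ∈ (0,1), q ≥ 1, and d(x) = ((1/m) ∫₀^m r_p(x)^q dp)^{1/q}, one has |d(x) - d(y)| ≤ ‖x - y‖ for all x, y ∈ ℝ^d. -/
open MeasureTheory Metric Set

noncomputable def rad {d : ℕ} (P : Measure (EuclideanSpace ℝ (Fin d))) (p : ℝ)
    (x : EuclideanSpace ℝ (Fin d)) : ℝ :=
  sInf {r : ℝ | 0 < r ∧ p ≤ (P (closedBall x r)).toReal}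

noncomputable def dtm {d : ℕ} (P : Measure (EuclideanSpace ℝ (Fin d))) (m q : ℝ)
    (x : EuclideanSpace ℝ (Fin d)) : ℝ :=
  ((1 / m) * ∫ p in (0:ℝ)..m, rad P p x ^ q) ^ (1 / q)

/-!
For fixed `x`, `p ↦ r_p(x)` is monotone, hence measurable and bounded by `r_m(x)` on `(0, m]`, so it
lies in `L^q(0, m]` and `d(x) = m^(-1/q) ‖r(x)‖_q`. For fixed `p < 1`, `x ↦ r_p(x)` is 1-Lipschitz,
because `B(y, r) ⊆ B(x, r + |x - y|)`. Hence `‖r(x) - r(y)‖_q ≤ m^(1/q) |x - y|`, and the reverse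
triangle inequality in `L^q` gives `|d(x) - d(y)| ≤ |x - y|`.
-/

open Filter Topology
open scoped ENNReal

section

variable {d : ℕ} (P : Measure (EuclideanSpace ℝ (Fin d)))

lemma rad_nonneg (p : ℝ) (x : EuclideanSpace ℝ (Fin d)) : 0 ≤ rad P p x :=
  Real.sInf_nonneg fun _ hr => hr.1.le

lemma rad_le_of_le_measureReal {p r : ℝ} {x : EuclideanSpace ℝ (Fin d)} (hr : 0 < r)
    (hp : p ≤ P.real (closedBall x r)) : rad P p x ≤ r :=
  csInf_le ⟨0, fun _ hs => hs.1.le⟩ ⟨hr, hp⟩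

variable [IsFiniteMeasure P]

lemma rad_set_nonempty {p : ℝ} (hp : p < P.real univ) (x : EuclideanSpace ℝ (Fin d)) :
    {r : ℝ | 0 < r ∧ p ≤ P.real (closedBall x r)}.Nonempty := by
  have hlim : Tendsto (fun n : ℕ => P.real (closedBall x n)) atTop (𝓝 (P.real univ)) := by
    rw [← iUnion_closedBall_nat x]
    exact (ENNReal.tendsto_toReal (measure_ne_top P _)).comp <| tendsto_measure_iUnion_atTop
      fun a b hab => closedBall_subset_closedBall (by exact_mod_cast hab)
  obtain ⟨n, hn⟩ := (hlim.eventually (eventually_ge_nhds hp)).exists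
  exact ⟨n + 1, by positivity,
    hn.trans (measureReal_mono (closedBall_subset_closedBall (by linarith)))⟩

lemma rad_le_rad_add_dist {p : ℝ} (hp : p < P.real univ) (x y : EuclideanSpace ℝ (Fin d)) :
    rad P p x ≤ rad P p y + dist x y := by
  rw [← sub_le_iff_le_add]
  refine le_csInf (rad_set_nonempty P hp y) fun r ⟨hr, hpr⟩ => sub_le_iff_le_add.2 ?_
  refine rad_le_of_le_measureReal P (by positivity) (hpr.trans (measureReal_mono ?_))
  exact closedBall_subset_closedBall' (by rw [dist_comm])

lemma lipschitzWith_rad {p : ℝ} (hp : p < P.real univ) : LipschitzWith 1 (rad P p) :=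
  LipschitzWith.of_le_add (rad_le_rad_add_dist P hp)

lemma monotoneOn_rad (x : EuclideanSpace ℝ (Fin d)) :
    MonotoneOn (fun p => rad P p x) (Iio (P.real univ)) := fun _ _ _ hb hab =>
  csInf_le_csInf ⟨0, fun _ hs => hs.1.le⟩ (rad_set_nonempty P hb x)
    fun _ ⟨hr, hpr⟩ => ⟨hr, hab.trans hpr⟩

lemma memLp_rad {m : ℝ} (hm : m < P.real univ) (x : EuclideanSpace ℝ (Fin d)) (s : ℝ≥0∞) :
    MemLp (fun p => rad P p x) s (volume.restrict (Ioc 0 m)) := by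
  have hmono : MonotoneOn (fun p => rad P p x) (Ioc 0 m) :=
    (monotoneOn_rad P x).mono fun p hp => hp.2.trans_lt hm
  refine .of_bound
    (aemeasurable_restrict_of_monotoneOn measurableSet_Ioc hmono).aestronglyMeasurable (rad P m x)
    (ae_restrict_of_forall_mem measurableSet_Ioc fun p hp => ?_)
  rw [Real.norm_of_nonneg (rad_nonneg P p x)]
  exact hmono hp ⟨hp.1.trans_le hp.2, le_rfl⟩ hp.2

lemma dtm_eq_eLpNorm {m q : ℝ} (hm₀ : 0 ≤ m) (hm : m < P.real univ) (hq : 0 < q)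
    (x : EuclideanSpace ℝ (Fin d)) :
    dtm P m q x = (1 / m) ^ (1 / q) *
      (eLpNorm (fun p => rad P p x) (ENNReal.ofReal q) (volume.restrict (Ioc 0 m))).toReal := by
  rw [(memLp_rad P hm x _).eLpNorm_eq_integral_rpow_norm (by simpa using hq) ENNReal.ofReal_ne_top,
    ENNReal.toReal_ofReal (by positivity), ENNReal.toReal_ofReal hq.le, dtm,
    intervalIntegral.integral_of_le hm₀, Real.mul_rpow (by positivity)
      (integral_nonneg fun p => Real.rpow_nonneg (rad_nonneg P p x) q), one_div q]
  simp only [Real.norm_of_nonneg (rad_nonneg P _ x)]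

lemma lipschitzWith_dtm {m q : ℝ} (hm₀ : 0 < m) (hm : m < P.real univ) (hq : 1 ≤ q) :
    LipschitzWith 1 (dtm P m q) := by
  have : Fact (1 ≤ ENNReal.ofReal q) := ⟨by simpa using hq⟩
  let F (x : EuclideanSpace ℝ (Fin d)) : Lp ℝ (ENNReal.ofReal q) (volume.restrict (Ioc 0 m)) :=
    (memLp_rad P hm x _).toLp
  have hF (x : EuclideanSpace ℝ (Fin d)) : dtm P m q x = (1 / m) ^ (1 / q) * ‖F x‖ := by
    rw [Lp.norm_toLp, dtm_eq_eLpNorm P hm₀.le hm (by positivity)]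
  have hFsub (x y : EuclideanSpace ℝ (Fin d)) : ‖F x - F y‖ ≤ m ^ (1 / q) * dist x y := by
    rw [← (memLp_rad P hm x _).toLp_sub (memLp_rad P hm y _)]
    refine (Lp.norm_le_of_ae_bound (dist_nonneg (x := x) (y := y)) ?_).trans_eq ?_
    · filter_upwards [((memLp_rad P hm x _).sub (memLp_rad P hm y _)).coeFn_toLp,
        ae_restrict_mem measurableSet_Ioc] with p hp hpm
      rw [hp, Pi.sub_apply, ← dist_eq_norm]
      simpa using (lipschitzWith_rad P (hpm.2.trans_lt hm)).dist_le_mul x y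
    · rw [measureUnivNNReal, ENNReal.coe_toNNReal_eq_toReal, Measure.restrict_apply_univ,
        Real.volume_Ioc, sub_zero, ENNReal.toReal_ofReal hm₀.le,
        ENNReal.toReal_ofReal (by linarith), one_div]
  refine LipschitzWith.of_dist_le_mul fun x y => ?_
  calc dist (dtm P m q x) (dtm P m q y) = (1 / m) ^ (1 / q) * |‖F x‖ - ‖F y‖| := by
        rw [Real.dist_eq, hF, hF, ← mul_sub, abs_mul, abs_of_nonneg (by positivity)]
    _ ≤ (1 / m) ^ (1 / q) * (m ^ (1 / q) * dist x y) := by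
        gcongr
        exact (abs_norm_sub_norm_le _ _).trans (hFsub x y)
    _ = 1 * dist x y := by
        rw [← mul_assoc, ← Real.mul_rpow (by positivity) hm₀.le, one_div_mul_cancel hm₀.ne',
          Real.one_rpow]

end

theorem stmt3 {d : ℕ} (P : Measure (EuclideanSpace ℝ (Fin d))) [IsProbabilityMeasure P]
    (m q : ℝ) (hm : m ∈ Set.Ioo (0:ℝ) 1) (hq : 1 ≤ q)
    (x y : EuclideanSpace ℝ (Fin d)) :
    |dtm P m q x - dtm P m q y| ≤ ‖x - y‖ := by
  have := (lipschitzWith_dtm P hm.1 (by simpa using hm.2) hq).dist_le_mul x y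
  simpa [Real.dist_eq, dist_eq_norm] using this
end

section
/- Upper bound on DTM inside the support under the (a,b)-condition: let P = (1−ε)P₀ + εP₁ with ε ∈ [0,1), and suppose x satisfies the (a,b)-condition for P₀: P₀(B(x,r)) ≥ min{1, a r^b} for all r > 0, with a > 0, b > 0. Then for m ∈ (0,1) with m/((1−ε)) ≤ 1 and any q ≥ 1, (1/m)∫₀^m r_{P,t}(x)^q dt ≤ (b/(b+q)) · (m/(a(1−ε)))^{q/b}. -/
open MeasureTheory Metric Set

theorem stmt10 {d : ℕ} (P₀ P₁ : Measure (EuclideanSpace ℝ (Fin d)))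
    [IsProbabilityMeasure P₀] [IsProbabilityMeasure P₁]
    (ε a b m q : ℝ) (hε : ε ∈ Set.Ico (0:ℝ) 1) (ha : 0 < a) (hb : 0 < b)
    (hm : m ∈ Set.Ioo (0:ℝ) 1) (hmε : m / (1 - ε) ≤ 1) (hq : 1 ≤ q)
    (x : EuclideanSpace ℝ (Fin d))
    (hab : ∀ r : ℝ, 0 < r → min 1 (a * r ^ b) ≤ (P₀ (closedBall x r)).toReal) :
    (1 / m) * (∫ t in (0:ℝ)..m,
        rad (ENNReal.ofReal (1 - ε) • P₀ + ENNReal.ofReal ε • P₁) t x ^ q)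
      ≤ (b / (b + q)) * (m / (a * (1 - ε))) ^ (q / b) := by
  obtain ⟨hε0, hε1⟩ := hε
  obtain ⟨hm0, hm1⟩ := hm
  have h1ε : (0:ℝ) < 1 - ε := by linarith
  set c : ℝ := a * (1 - ε) with hc
  have hc0 : 0 < c := mul_pos ha h1ε
  set P : Measure (EuclideanSpace ℝ (Fin d)) :=
    ENNReal.ofReal (1 - ε) • P₀ + ENNReal.ofReal ε • P₁ with hP
  have hq0 : (0:ℝ) < q := by linarith
  have hbq : (0:ℝ) < b + q := by linarith
  set p : ℝ := q / b with hpdef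
  have hp0 : 0 < p := div_pos hq0 hb
  -- lower bound on measure of balls
  have hPlow : ∀ r : ℝ, 0 < r →
      (1 - ε) * min 1 (a * r ^ b) ≤ (P (closedBall x r)).toReal := by
    intro r hr
    have h1 : (ENNReal.ofReal (1 - ε) • P₀) (closedBall x r) ≤ P (closedBall x r) := by
      simp [hP, Measure.add_apply]
    have hfin : P (closedBall x r) ≠ ⊤ := by
      have hle : P (closedBall x r) ≤ P univ := measure_mono (subset_univ _)
      refine ne_top_of_le_ne_top ?_ hle
      simp only [hP, Measure.add_apply, Measure.smul_apply, measure_univ, smul_eq_mul,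
        mul_one]
      finiteness
    have h2 : ((ENNReal.ofReal (1 - ε) • P₀) (closedBall x r)).toReal
        = (1 - ε) * (P₀ (closedBall x r)).toReal := by
      simp [Measure.smul_apply, ENNReal.toReal_mul, ENNReal.toReal_ofReal h1ε.le,
        smul_eq_mul]
    calc (1 - ε) * min 1 (a * r ^ b) ≤ (1 - ε) * (P₀ (closedBall x r)).toReal :=
          mul_le_mul_of_nonneg_left (hab r hr) h1ε.le
      _ = ((ENNReal.ofReal (1 - ε) • P₀) (closedBall x r)).toReal := h2.symm
      _ ≤ (P (closedBall x r)).toReal := ENNReal.toReal_mono hfin h1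
  -- membership of the candidate radius
  have hmem : ∀ t : ℝ, 0 < t → t ≤ m →
      ((t / c) ^ (1/b)) ∈ {r : ℝ | 0 < r ∧ t ≤ (P (closedBall x r)).toReal} := by
    intro t ht htm
    have htc : 0 < t / c := div_pos ht hc0
    have hr : 0 < (t / c) ^ (1/b) := Real.rpow_pos_of_pos htc _
    refine ⟨hr, ?_⟩
    have hrb : ((t / c) ^ (1/b)) ^ b = t / c := by
      rw [← Real.rpow_mul htc.le, one_div_mul_cancel hb.ne', Real.rpow_one]
    have harb : a * ((t / c) ^ (1/b)) ^ b = t / (1 - ε) := by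
      rw [hrb, hc]; field_simp
    have hminle : t / (1 - ε) ≤ 1 :=
      le_trans (by gcongr) hmε
    have hmin : min 1 (a * ((t / c) ^ (1/b)) ^ b) = t / (1 - ε) := by
      rw [harb, min_eq_right hminle]
    calc t = (1 - ε) * (t / (1 - ε)) := by field_simp
      _ = (1 - ε) * min 1 (a * ((t / c) ^ (1/b)) ^ b) := by rw [hmin]
      _ ≤ (P (closedBall x ((t / c) ^ (1/b)))).toReal := hPlow _ hr
  have hbig : ((m / c) ^ (1/b)) ∈ {r : ℝ | 0 < r ∧ m ≤ (P (closedBall x r)).toReal} :=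
    hmem m hm0 le_rfl
  have hbdd : ∀ t : ℝ, BddBelow {r : ℝ | 0 < r ∧ t ≤ (P (closedBall x r)).toReal} :=
    fun t => ⟨0, fun r hr => hr.1.le⟩
  have hnonneg : ∀ t : ℝ, 0 ≤ rad P t x := fun t =>
    Real.sInf_nonneg (fun r hr => hr.1.le)
  -- pointwise bound
  have hpt : ∀ t ∈ Set.Icc (0:ℝ) m, rad P t x ≤ (t / c) ^ (1/b) := by
    rintro t ⟨ht0, htm⟩
    rcases eq_or_lt_of_le ht0 with h | h
    · subst h
      have hset : {r : ℝ | 0 < r ∧ (0:ℝ) ≤ (P (closedBall x r)).toReal} = Ioi 0 := by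
        ext r; simp [ENNReal.toReal_nonneg]
      have h0 : rad P 0 x = 0 := by rw [rad, hset, csInf_Ioi]
      have hz : ((0:ℝ)/c) ^ (1/b) = 0 := by
        rw [zero_div, Real.zero_rpow (one_div_ne_zero hb.ne')]
      rw [h0, hz]
    · exact csInf_le (hbdd t) (hmem t h htm)
  -- pointwise bound on the q-th power
  have hpt2 : ∀ t ∈ Set.Icc (0:ℝ) m, rad P t x ^ q ≤ (t / c) ^ p := by
    intro t ht
    calc rad P t x ^ q ≤ ((t / c) ^ (1/b)) ^ q :=
          Real.rpow_le_rpow (hnonneg t) (hpt t ht) hq0.le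
      _ = (t / c) ^ p := by
          rw [← Real.rpow_mul (div_nonneg ht.1 hc0.le)]
          congr 1
          rw [hpdef]; ring
  -- monotonicity / integrability
  have hradmono : MonotoneOn (fun t => rad P t x) (Set.Icc 0 m) := by
    intro s hs t ht hst
    refine csInf_le_csInf (hbdd s)
      ⟨(m / c) ^ (1/b), hbig.1, le_trans ht.2 hbig.2⟩ ?_
    rintro r ⟨hr1, hr2⟩
    exact ⟨hr1, le_trans hst hr2⟩
  have hmono : MonotoneOn (fun t => rad P t x ^ q) (Set.Icc 0 m) := by
    intro s hs t ht hst
    exact Real.rpow_le_rpow (hnonneg s) (hradmono hs ht hst) hq0.le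
  have hgmono : MonotoneOn (fun t : ℝ => (t / c) ^ p) (Set.Icc 0 m) := by
    intro s hs t ht hst
    exact Real.rpow_le_rpow (div_nonneg hs.1 hc0.le) (by gcongr) hp0.le
  have hint1 : IntervalIntegrable (fun t => rad P t x ^ q) volume 0 m := by
    apply MonotoneOn.intervalIntegrable
    rwa [uIcc_of_le hm0.le]
  have hint2 : IntervalIntegrable (fun t : ℝ => (t / c) ^ p) volume 0 m := by
    apply MonotoneOn.intervalIntegrable
    rwa [uIcc_of_le hm0.le]
  have hIle : (∫ t in (0:ℝ)..m, rad P t x ^ q) ≤ ∫ t in (0:ℝ)..m, (t / c) ^ p :=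
    intervalIntegral.integral_mono_on hm0.le hint1 hint2 hpt2
  -- value of the comparison integral
  have hEq : EqOn (fun t : ℝ => (t / c) ^ p) (fun t : ℝ => t ^ p / c ^ p)
      (Set.uIcc (0:ℝ) m) := by
    intro t ht
    rw [uIcc_of_le hm0.le] at ht
    exact Real.div_rpow ht.1 hc0.le p
  have hval : (∫ t in (0:ℝ)..m, (t / c) ^ p) = m ^ (p+1) / (p+1) / c ^ p := by
    rw [intervalIntegral.integral_congr hEq, intervalIntegral.integral_div,
      integral_rpow (Or.inl (by linarith : (-1:ℝ) < p)),
      Real.zero_rpow (by positivity : p + 1 ≠ 0)]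
    ring
  have hfin : (1 / m) * (m ^ (p+1) / (p+1) / c ^ p) = (b / (b + q)) * (m / c) ^ p := by
    rw [Real.div_rpow hm0.le hc0.le, Real.rpow_add_one hm0.ne' p]
    have hp1 : p + 1 = (b + q) / b := by rw [hpdef]; field_simp; ring
    rw [hp1]
    have hmp : 0 < m ^ p := Real.rpow_pos_of_pos hm0 p
    have hcp : 0 < c ^ p := Real.rpow_pos_of_pos hc0 p
    field_simp
  calc (1 / m) * (∫ t in (0:ℝ)..m, rad P t x ^ q)
      ≤ (1 / m) * (∫ t in (0:ℝ)..m, (t / c) ^ p) := by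
        apply mul_le_mul_of_nonneg_left hIle
        positivity
    _ = (b / (b + q)) * (m / c) ^ p := by rw [hval, hfin]
end

section
/- Lower bound on DTM at anomalous points: let P = (1−ε)P₀ + εP₁ with ε ∈ [0,1), suppose the supports S₀ of P₀ and S₁ of P₁ satisfy dist(S₀, S₁) ≥ η > 0, and let y ∈ S₁. Then for any m ∈ (ε, 1) and t ∈ (ε, m], r_{P,t}(y) ≥ η, and consequently (1/m)∫₀^m r_{P,t}(y)^q dt ≥ ((m−ε)/m) η^q for any q ≥ 1. -/
open MeasureTheory Metric Set

theorem stmt11 {d : ℕ} (P₀ P₁ : Measure (EuclideanSpace ℝ (Fin d)))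
    [IsProbabilityMeasure P₀] [IsProbabilityMeasure P₁]
    (S₀ S₁ : Set (EuclideanSpace ℝ (Fin d)))
    (hS₀ : P₀ S₀ᶜ = 0) (hS₁ : P₁ S₁ᶜ = 0)
    (ε η m q : ℝ) (hε : ε ∈ Set.Ico (0:ℝ) 1) (hη : 0 < η)
    (hsep : ∀ x ∈ S₀, ∀ z ∈ S₁, η ≤ dist x z)
    (hm : m ∈ Set.Ioo ε 1) (hq : 1 ≤ q)
    (y : EuclideanSpace ℝ (Fin d)) (hy : y ∈ S₁) :
    (∀ t : ℝ, ε < t → t ≤ m →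
        η ≤ rad (ENNReal.ofReal (1 - ε) • P₀ + ENNReal.ofReal ε • P₁) t y) ∧
    ((m - ε) / m * η ^ q ≤ (1 / m) * ∫ t in (0:ℝ)..m,
        rad (ENNReal.ofReal (1 - ε) • P₀ + ENNReal.ofReal ε • P₁) t y ^ q) := by
  obtain ⟨hε0, hε1⟩ := hε
  obtain ⟨hmε, hm1⟩ := hm
  have hm0 : 0 < m := lt_of_le_of_lt hε0 hmε
  have hq0 : (0:ℝ) ≤ q := le_trans zero_le_one hq
  set P : Measure (EuclideanSpace ℝ (Fin d)) :=
    ENNReal.ofReal (1 - ε) • P₀ + ENNReal.ofReal ε • P₁ with hP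
  have hPuniv : P univ = 1 := by
    simp only [hP, Measure.add_apply, Measure.smul_apply, smul_eq_mul, measure_univ, mul_one]
    rw [← ENNReal.ofReal_add (by linarith) hε0]
    norm_num
  have hPfin : ∀ s : Set (EuclideanSpace ℝ (Fin d)), P s ≠ ⊤ := by
    intro s
    have : P s ≤ 1 := hPuniv ▸ measure_mono (subset_univ s)
    exact ne_top_of_le_ne_top ENNReal.one_ne_top this
  -- nonemptiness of the defining set for t < 1
  have hne : ∀ t : ℝ, t < 1 →
      ∃ r : ℝ, 0 < r ∧ t ≤ (P (closedBall y r)).toReal := by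
    intro t ht
    have hmonoB : Monotone (fun n : ℕ => closedBall y n) := by
      intro a b hab
      exact closedBall_subset_closedBall (by exact_mod_cast hab)
    have hU : (⋃ n : ℕ, closedBall y (n : ℝ)) = univ := by
      ext x
      simp only [mem_iUnion, mem_closedBall, mem_univ, iff_true]
      obtain ⟨n, hn⟩ := exists_nat_ge (dist x y)
      exact ⟨n, hn⟩
    have htend : Filter.Tendsto (fun n : ℕ => P (closedBall y n)) Filter.atTop
        (nhds (P (⋃ n : ℕ, closedBall y (n : ℝ)))) :=
      tendsto_measure_iUnion_atTop hmonoB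
    rw [hU, hPuniv] at htend
    have hlt : ENNReal.ofReal t < 1 := by
      exact ENNReal.ofReal_lt_one.mpr ht
    obtain ⟨n, hn⟩ := (htend.eventually (eventually_ge_nhds hlt)).exists
    refine ⟨(n : ℝ) + 1, by positivity, ?_⟩
    have h2 : ENNReal.ofReal t ≤ P (closedBall y ((n : ℝ) + 1)) :=
      le_trans hn (measure_mono (closedBall_subset_closedBall (by linarith)))
    rw [← ENNReal.ofReal_le_iff_le_toReal (hPfin _)]
    exact h2
  -- every element of the set is ≥ η when t > ε
  have hmem : ∀ t : ℝ, ε < t → ∀ r : ℝ,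
      (0 < r ∧ t ≤ (P (closedBall y r)).toReal) → η ≤ r := by
    intro t ht r ⟨hr0, hrt⟩
    by_contra h
    push_neg at h
    have hsub : closedBall y r ⊆ S₀ᶜ := by
      intro x hx hxS₀
      have h1 : η ≤ dist x y := hsep x hxS₀ y hy
      have h2 : dist x y ≤ r := mem_closedBall.mp hx
      linarith
    have h0 : P₀ (closedBall y r) = 0 := measure_mono_null hsub hS₀
    have hle : P (closedBall y r) ≤ ENNReal.ofReal ε := by
      simp only [hP, Measure.add_apply, Measure.smul_apply, smul_eq_mul, h0, mul_zero, zero_add]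
      calc ENNReal.ofReal ε * P₁ (closedBall y r) ≤ ENNReal.ofReal ε * 1 :=
            mul_le_mul_right prob_le_one _
        _ = ENNReal.ofReal ε := mul_one _
    have : (P (closedBall y r)).toReal ≤ ε := by
      have := ENNReal.toReal_mono ENNReal.ofReal_ne_top hle
      rwa [ENNReal.toReal_ofReal hε0] at this
    linarith
  -- Part 1
  have part1 : ∀ t : ℝ, ε < t → t ≤ m → η ≤ rad P t y := by
    intro t ht htm
    obtain ⟨r, hr⟩ := hne t (lt_of_le_of_lt htm hm1)
    exact le_csInf ⟨r, hr⟩ (fun b hb => hmem t ht b hb)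
  refine ⟨part1, ?_⟩
  -- nonnegativity of rad
  have hradnn : ∀ t : ℝ, 0 ≤ rad P t y := by
    intro t
    exact Real.sInf_nonneg (fun r hr => hr.1.le)
  -- monotonicity of rad on [0, m]
  have hmono : MonotoneOn (fun t => rad P t y) (Set.Icc 0 m) := by
    intro a ha b hb hab
    obtain ⟨r, hr⟩ := hne b (lt_of_le_of_lt hb.2 hm1)
    apply csInf_le_csInf ⟨0, fun x hx => hx.1.le⟩ ⟨r, hr⟩
    intro x hx
    exact ⟨hx.1, le_trans hab hx.2⟩
  have hfmono : MonotoneOn (fun t => rad P t y ^ q) (Set.Icc 0 m) := by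
    intro a ha b hb hab
    exact Real.rpow_le_rpow (hradnn a) (hmono ha hb hab) hq0
  have hint : IntervalIntegrable (fun t => rad P t y ^ q) volume 0 m := by
    apply MonotoneOn.intervalIntegrable
    rwa [uIcc_of_le hm0.le]
  have hint1 : IntervalIntegrable (fun t => rad P t y ^ q) volume 0 ε :=
    hint.mono_set (by rw [uIcc_of_le hε0, uIcc_of_le hm0.le]; exact Icc_subset_Icc le_rfl hmε.le)
  have hint2 : IntervalIntegrable (fun t => rad P t y ^ q) volume ε m :=
    hint.mono_set (by rw [uIcc_of_le hmε.le, uIcc_of_le hm0.le]; exact Icc_subset_Icc hε0 le_rfl)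
  have hsplit : (∫ t in (0:ℝ)..ε, rad P t y ^ q) + (∫ t in ε..m, rad P t y ^ q)
      = ∫ t in (0:ℝ)..m, rad P t y ^ q :=
    intervalIntegral.integral_add_adjacent_intervals hint1 hint2
  have h2 : 0 ≤ ∫ t in (0:ℝ)..ε, rad P t y ^ q :=
    intervalIntegral.integral_nonneg hε0 (fun u hu => Real.rpow_nonneg (hradnn u) q)
  have h3 : (m - ε) * η ^ q ≤ ∫ t in ε..m, rad P t y ^ q := by
    have hc : (∫ _ in ε..m, η ^ q) = (m - ε) * η ^ q := by
      rw [intervalIntegral.integral_const, smul_eq_mul]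
    rw [← hc]
    apply intervalIntegral.integral_mono_ae_restrict hmε.le intervalIntegrable_const hint2
    rw [← Measure.restrict_congr_set Ioc_ae_eq_Icc]
    apply ae_restrict_of_forall_mem measurableSet_Ioc
    intro t ht
    exact Real.rpow_le_rpow hη.le (part1 t ht.1 ht.2) hq0
  have hI : (m - ε) * η ^ q ≤ ∫ t in (0:ℝ)..m, rad P t y ^ q := by
    rw [← hsplit]; linarith
  have : (m - ε) / m * η ^ q = (1 / m) * ((m - ε) * η ^ q) := by ring
  rw [this]
  exact mul_le_mul_of_nonneg_left hI (by positivity)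
end

section
/- Separation condition in the case q = ∞: let P = (1−ε)P₀ + εP₁ with ε ∈ [0,1), dist(S₀,S₁) ≥ η, m ∈ (ε, 1) with m ≤ 1−ε, h ∈ (0, η). If x ∈ S₀ satisfies P₀(B(x,r)) ≥ min{1, a r^b} for all r > 0 with a ≥ (m/(1−ε)) (η − h)^{−b}, then r_{P,m}(x) + h ≤ inf_{y ∈ S₁} r_{P,m}(y). -/
open MeasureTheory Metric Set

theorem stmt13 {d : ℕ} (P₀ P₁ : Measure (EuclideanSpace ℝ (Fin d)))
    [IsProbabilityMeasure P₀] [IsProbabilityMeasure P₁]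
    (S₀ S₁ : Set (EuclideanSpace ℝ (Fin d)))
    (hS₀ : P₀ S₀ᶜ = 0) (hS₁ : P₁ S₁ᶜ = 0) (hS₁ne : S₁.Nonempty)
    (ε η m h a b : ℝ) (hε : ε ∈ Set.Ico (0:ℝ) 1) (hη : 0 < η)
    (hsep : ∀ x' ∈ S₀, ∀ z ∈ S₁, η ≤ dist x' z)
    (hm : m ∈ Set.Ioo ε 1) (hmε : m ≤ 1 - ε) (hh : h ∈ Set.Ioo 0 η)
    (ha0 : 0 < a) (hb : 0 < b)
    (x : EuclideanSpace ℝ (Fin d)) (hx : x ∈ S₀)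
    (hab : ∀ r : ℝ, 0 < r → min 1 (a * r ^ b) ≤ (P₀ (closedBall x r)).toReal)
    (ha : (m / (1 - ε)) * (η - h) ^ (-b) ≤ a) :
    rad (ENNReal.ofReal (1 - ε) • P₀ + ENNReal.ofReal ε • P₁) m x + h
      ≤ sInf ((fun y => rad (ENNReal.ofReal (1 - ε) • P₀ + ENNReal.ofReal ε • P₁) m y)
          '' S₁) := by
  set P : Measure (EuclideanSpace ℝ (Fin d)) :=
    ENNReal.ofReal (1 - ε) • P₀ + ENNReal.ofReal ε • P₁ with hP
  have hε1 : (0:ℝ) < 1 - ε := by linarith [hε.2]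
  have hηh : (0:ℝ) < η - h := by linarith [hh.2]
  have hPapp : ∀ (y : EuclideanSpace ℝ (Fin d)) (s : Set (EuclideanSpace ℝ (Fin d))),
      P s = ENNReal.ofReal (1 - ε) * P₀ s + ENNReal.ofReal ε * P₁ s := by
    intro y s
    simp [hP, Measure.add_apply, Measure.smul_apply, smul_eq_mul]
  have hfin : ∀ s : Set (EuclideanSpace ℝ (Fin d)), P s ≠ ⊤ := by
    intro s
    rw [hPapp x s]
    exact ENNReal.add_ne_top.2 ⟨ENNReal.mul_ne_top ENNReal.ofReal_ne_top
      (measure_ne_top _ _), ENNReal.mul_ne_top ENNReal.ofReal_ne_top (measure_ne_top _ _)⟩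
  -- P is a probability measure
  have hPuniv : P univ = 1 := by
    rw [hPapp x univ]
    simp only [measure_univ, mul_one]
    rw [← ENNReal.ofReal_add (by linarith) hε.1]
    norm_num
  -- Step 1 : rad P m x ≤ η - h
  have hmem : (η - h) ∈ {r : ℝ | 0 < r ∧ m ≤ (P (closedBall x r)).toReal} := by
    refine ⟨hηh, ?_⟩
    have hpow : (0:ℝ) < (η - h) ^ b := Real.rpow_pos_of_pos hηh b
    have hmdiv : m / (1 - ε) ≤ a * (η - h) ^ b := by
      have := mul_le_mul_of_nonneg_right ha (le_of_lt hpow)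
      calc m / (1 - ε) = m / (1 - ε) * ((η - h) ^ (-b) * (η - h) ^ b) := by
            rw [← Real.rpow_add hηh]; simp
        _ = m / (1 - ε) * (η - h) ^ (-b) * (η - h) ^ b := by ring
        _ ≤ a * (η - h) ^ b := this
    have hm1 : m / (1 - ε) ≤ 1 := (div_le_one hε1).2 hmε
    have h₀ : m / (1 - ε) ≤ (P₀ (closedBall x (η - h))).toReal :=
      le_trans (le_min hm1 hmdiv) (hab _ hηh)
    have : (1 - ε) * (m / (1 - ε)) ≤ (1 - ε) * (P₀ (closedBall x (η - h))).toReal :=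
      mul_le_mul_of_nonneg_left h₀ hε1.le
    rw [mul_div_cancel₀ _ hε1.ne'] at this
    refine le_trans this ?_
    rw [hPapp x]
    rw [ENNReal.toReal_add (ENNReal.mul_ne_top ENNReal.ofReal_ne_top (measure_ne_top _ _))
      (ENNReal.mul_ne_top ENNReal.ofReal_ne_top (measure_ne_top _ _)),
      ENNReal.toReal_mul, ENNReal.toReal_mul, ENNReal.toReal_ofReal hε1.le,
      ENNReal.toReal_ofReal hε.1]
    have : 0 ≤ ε * (P₁ (closedBall x (η - h))).toReal :=
      mul_nonneg hε.1 ENNReal.toReal_nonneg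
    linarith
  have hradx : rad P m x ≤ η - h :=
    csInf_le ⟨0, fun r hr => hr.1.le⟩ hmem
  -- Step 2 : rad P m y ≥ η for y ∈ S₁
  have hrady : ∀ y ∈ S₁, η ≤ rad P m y := by
    intro y hy
    -- the set is nonempty
    have hne : {r : ℝ | 0 < r ∧ m ≤ (P (closedBall y r)).toReal}.Nonempty := by
      have hmono : Monotone (fun n : ℕ => closedBall y n) := fun i j hij =>
        closedBall_subset_closedBall (Nat.cast_le.2 hij)
      have htend := tendsto_measure_iUnion_atTop (μ := P) hmono
      rw [iUnion_closedBall_nat, hPuniv] at htend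
      have hmlt : ENNReal.ofReal m < 1 := by
        rw [← ENNReal.ofReal_one]
        exact ENNReal.ofReal_lt_ofReal_iff_of_nonneg (le_trans hε.1 hm.1.le) |>.2 hm.2
      have := htend.eventually (eventually_ge_nhds hmlt)
      obtain ⟨n, hn⟩ := (this.and (Filter.eventually_ge_atTop 1)).exists
      · refine ⟨n, by exact_mod_cast Nat.lt_of_lt_of_le Nat.zero_lt_one hn.2, ?_⟩
        have := hn.1
        rw [← ENNReal.ofReal_le_iff_le_toReal (hfin _)] at *
        exact this
    refine le_csInf hne ?_
    rintro r ⟨hr0, hrm⟩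
    by_contra hlt
    push_neg at hlt
    -- closedBall y r ⊆ S₀ᶜ
    have hsub : closedBall y r ⊆ S₀ᶜ := by
      intro z hz hzS₀
      have hd := hsep z hzS₀ y hy
      rw [mem_closedBall] at hz
      linarith
    have hP₀0 : P₀ (closedBall y r) = 0 :=
      measure_mono_null hsub hS₀
    have : (P (closedBall y r)).toReal ≤ ε := by
      rw [hPapp y, hP₀0, mul_zero, zero_add, ENNReal.toReal_mul,
        ENNReal.toReal_ofReal hε.1]
      have : (P₁ (closedBall y r)).toReal ≤ 1 := by
        rw [← ENNReal.toReal_one]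
        exact ENNReal.toReal_mono ENNReal.one_ne_top prob_le_one
      nlinarith [hε.1]
    linarith [hm.1]
  -- conclude
  have himne : ((fun y => rad P m y) '' S₁).Nonempty := hS₁ne.image _
  have : η ≤ sInf ((fun y => rad P m y) '' S₁) := by
    refine le_csInf himne ?_
    rintro _ ⟨y, hy, rfl⟩
    exact hrady y hy
  linarith
end
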